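/- The number of semistandard Young tableaux of rectangular shape (2a, 2a) filled with exactly a copies of each of 1, 2, 3, 4 (rows weakly increasing, columns strictly increasing) equals a + 1. -/
import Mathlib

private def fTab (a p : ℕ) : Fin 2 → Fin (2 * a) → Fin 4 := fun i j =>
  if i = 0 then (if (j : ℕ) < a then 0 else if (j : ℕ) < a + p then 1 else 2)
  else (if (j : ℕ) < a - p then 1 else if (j : ℕ) < a then 2 else 3)

private lemma card_filter_of_iff_interval {m c d : ℕ} (hd : d ≤ m)
    (P : Fin m → Prop) [DecidablePred P]
    (h : ∀ j : Fin m, P j ↔ (c ≤ (j : ℕ) ∧ (j : ℕ) < d)) :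
    (Finset.univ.filter P).card = d - c := by
  rw [← Finset.card_image_of_injective _ Fin.val_injective]
  have himg : (Finset.univ.filter P).image Fin.val = Finset.Ico c d := by
    ext n
    simp only [Finset.mem_image, Finset.mem_filter, Finset.mem_univ, true_and, Finset.mem_Ico]
    constructor
    · rintro ⟨j, hj, rfl⟩; exact (h j).mp hj
    · intro hn; exact ⟨⟨n, lt_of_lt_of_le hn.2 hd⟩, (h _).mpr hn, rfl⟩
  rw [himg, Nat.card_Ico]

private lemma lower_set_card {m : ℕ} (P : Fin m → Prop) [DecidablePred P]
    (hP : ∀ j k : Fin m, k ≤ j → P j → P k) (j : Fin m) :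
    P j ↔ (j : ℕ) < (Finset.univ.filter P).card := by
  constructor
  · intro hj
    have hsub : Finset.Iic j ⊆ Finset.univ.filter P := by
      intro k hk
      simp only [Finset.mem_filter, Finset.mem_univ, true_and]
      exact hP j k (Finset.mem_Iic.mp hk) hj
    have := Finset.card_le_card hsub
    have hIic : (Finset.Iic j).card = (j : ℕ) + 1 := by rw [Fin.card_Iic]
    omega
  · intro hj
    by_contra hPj
    have hsub : Finset.univ.filter P ⊆ Finset.Iio j := by
      intro k hk
      simp only [Finset.mem_filter, Finset.mem_univ, true_and] at hk
      rw [Finset.mem_Iio]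
      by_contra hkj
      exact hPj (hP k j (le_of_not_gt hkj) hk)
    have := Finset.card_le_card hsub
    have hIio : (Finset.Iio j).card = (j : ℕ) := by rw [Fin.card_Iio]
    omega

private lemma prod_filter_split {m : ℕ} (T : Fin 2 → Fin m → Fin 4) (v : Fin 4) :
    (Finset.univ.filter (fun p : Fin 2 × Fin m => T p.1 p.2 = v)).card =
      (Finset.univ.filter fun j => T 0 j = v).card
        + (Finset.univ.filter fun j => T 1 j = v).card := by
  simp only [Finset.card_filter]
  rw [Fintype.sum_prod_type, Fin.sum_univ_two]

private lemma fTab_forward (a : ℕ) (T : Fin 2 → Fin (2 * a) → Fin 4)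
    (hmono : ∀ i j j', j ≤ j' → T i j ≤ T i j')
    (hcol : ∀ j, T 0 j < T 1 j)
    (hcount : ∀ v : Fin 4,
      (Finset.univ.filter (fun p : Fin 2 × Fin (2 * a) => T p.1 p.2 = v)).card = a) :
    ∃ p ≤ a, T = fTab a p := by
  set N : Fin 2 → Fin 4 → ℕ := fun i v => (Finset.univ.filter fun j => T i j = v).card with hN
  have hsplit : ∀ v, N 0 v + N 1 v = a := fun v => by
    rw [hN]; rw [← prod_filter_split T v]; exact hcount v
  have hrow : ∀ i, N i 0 + (N i 1 + (N i 2 + N i 3)) = 2 * a := by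
    intro i
    have := Finset.card_eq_sum_card_fiberwise
      (f := T i) (s := Finset.univ) (t := Finset.univ) (fun x _ => Finset.mem_univ _)
    rw [Finset.card_univ, Fintype.card_fin, Fin.sum_univ_four] at this
    simp only [hN]; omega
  have h10 : N 1 0 = 0 := by
    rw [hN]
    simp only [Finset.card_eq_zero, Finset.filter_eq_empty_iff, Finset.mem_univ]
    intro j _ h
    have := hcol j
    rw [h] at this
    exact absurd this (by simp)
  have h03 : N 0 3 = 0 := by
    rw [hN]
    simp only [Finset.card_eq_zero, Finset.filter_eq_empty_iff, Finset.mem_univ]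
    intro j _ h
    have := hcol j
    rw [h, Fin.lt_def] at this
    have := (T 1 j).2
    omega
  set p := N 0 1 with hpdef
  have hp : p ≤ a := by have := hsplit 1; omega
  have hC : ∀ (i : Fin 2) (v : Fin 4) (j : Fin (2 * a)),
      T i j ≤ v ↔ (j : ℕ) < (Finset.univ.filter fun k => T i k ≤ v).card := by
    intro i v j
    exact lower_set_card _ (fun j' k hk hj' => le_trans (hmono i k j' hk) hj') j
  have hC0 : ∀ i : Fin 2, (Finset.univ.filter fun k => T i k ≤ 0).card = N i 0 := by
    intro i
    rw [hN]
    congr 1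
    ext k
    simp [Fin.le_zero_iff]
  have hC1 : ∀ i : Fin 2, (Finset.univ.filter fun k => T i k ≤ 1).card = N i 0 + N i 1 := by
    intro i
    have heq : (Finset.univ.filter fun k => T i k ≤ 1) =
        (Finset.univ.filter fun k => T i k = 0) ∪ (Finset.univ.filter fun k => T i k = 1) := by
      ext k
      simp only [Finset.mem_filter, Finset.mem_union, Finset.mem_univ, true_and]
      rw [Fin.le_def, Fin.ext_iff, Fin.ext_iff]
      have := (T i k).2
      simp only [Fin.val_zero, Fin.val_one]
      omega
    rw [heq, Finset.card_union_of_disjoint]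
    rw [Finset.disjoint_left]
    intro k hk hk'
    simp only [Finset.mem_filter, Finset.mem_univ, true_and] at hk hk'
    rw [hk] at hk'
    exact absurd hk' (by simp)
  have hC2 : ∀ i : Fin 2, (Finset.univ.filter fun k => T i k ≤ 2).card = N i 0 + N i 1 + N i 2 := by
    intro i
    have heq : (Finset.univ.filter fun k => T i k ≤ 2) =
        Finset.univ \ (Finset.univ.filter fun k => T i k = 3) := by
      ext k
      simp only [Finset.mem_filter, Finset.mem_sdiff, Finset.mem_univ, true_and]
      rw [Fin.le_def, Fin.ext_iff]
      have := (T i k).2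
      simp only [Fin.val_two]
      omega
    rw [heq, Finset.card_sdiff_of_subset (Finset.filter_subset _ _), Finset.card_univ, Fintype.card_fin]
    have := hrow i
    simp only [hN] at this ⊢
    omega
  refine ⟨p, hp, ?_⟩
  have key : ∀ (i : Fin 2) (j : Fin (2 * a)), ((T i j : ℕ) ≤ 0 ↔ (j:ℕ) < N i 0) ∧
      ((T i j : ℕ) ≤ 1 ↔ (j:ℕ) < N i 0 + N i 1) ∧
      ((T i j : ℕ) ≤ 2 ↔ (j:ℕ) < N i 0 + N i 1 + N i 2) := by
    intro i j
    refine ⟨?_, ?_, ?_⟩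
    · rw [← hC0 i]; exact hC i 0 j
    · rw [← hC1 i]; exact hC i 1 j
    · rw [← hC2 i]; exact hC i 2 j
  have hvals : N 0 0 = a ∧ N 0 1 = p ∧ N 0 2 = a - p ∧ N 1 1 = a - p ∧ N 1 2 = p ∧ N 1 3 = a := by
    have h0 := hsplit 0; have h1 := hsplit 1; have h2 := hsplit 2; have h3 := hsplit 3
    have r0 := hrow 0; have r1 := hrow 1
    refine ⟨by omega, rfl, by omega, by omega, by omega, by omega⟩
  obtain ⟨e1, e2, e3, e4, e5, e6⟩ := hvals
  have hrow0 : ∀ j : Fin (2 * a), T 0 j = fTab a p 0 j := by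
    intro j
    have hj2 : (j : ℕ) < 2 * a := j.2
    have hT4 : (T 0 j : ℕ) < 4 := (T 0 j).2
    obtain ⟨k0, k1, k2⟩ := key 0 j
    apply Fin.ext
    simp only [fTab, reduceIte, apply_ite (Fin.val), Fin.val_zero, Fin.val_one, Fin.val_two]
    split_ifs <;> omega
  have hrow1 : ∀ j : Fin (2 * a), T 1 j = fTab a p 1 j := by
    intro j
    have hj2 : (j : ℕ) < 2 * a := j.2
    have hT4 : (T 1 j : ℕ) < 4 := (T 1 j).2
    obtain ⟨k0, k1, k2⟩ := key 1 j
    apply Fin.ext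
    simp only [fTab, reduceIte, apply_ite (Fin.val), Fin.val_zero, Fin.val_one, Fin.val_two]
    split_ifs <;> omega
  funext i j
  fin_cases i
  · exact hrow0 j
  · exact hrow1 j

private lemma fTab_mem (a p : ℕ) (hp : p ≤ a) :
    (∀ i j j', j ≤ j' → fTab a p i j ≤ fTab a p i j') ∧
    (∀ j, fTab a p 0 j < fTab a p 1 j) ∧
    (∀ v : Fin 4,
      (Finset.univ.filter (fun q : Fin 2 × Fin (2 * a) => fTab a p q.1 q.2 = v)).card = a) := by
  refine ⟨?_, ?_, ?_⟩
  · intro i j j' h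
    have h' : (j : ℕ) ≤ (j' : ℕ) := h
    fin_cases i <;>
      simp only [fTab, Fin.le_def, reduceIte, Fin.isValue] <;>
      · simp only [Fin.zero_eta, if_true, if_false, one_ne_zero, Fin.mk_one]
        split_ifs <;> simp_all <;> omega
  · intro j
    simp only [fTab, Fin.lt_def, reduceIte, Fin.isValue, one_ne_zero, if_false, if_true]
    have : (j : ℕ) < 2 * a := j.2
    split_ifs <;> simp_all <;> omega
  · intro v
    rw [prod_filter_split]
    fin_cases v
    · rw [card_filter_of_iff_interval (c := 0) (d := a) (by omega) _ (fun j => by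
          simp only [fTab, reduceIte, Fin.ext_iff, apply_ite (Fin.val)]
          split_ifs <;> simp <;> omega),
        card_filter_of_iff_interval (c := 0) (d := 0) (by omega) _ (fun j => by
          simp only [fTab, reduceIte, Fin.ext_iff, apply_ite (Fin.val)]
          split_ifs <;> simp <;> omega)]
      omega
    · rw [card_filter_of_iff_interval (c := a) (d := a + p) (by omega) _ (fun j => by
          simp only [fTab, reduceIte, Fin.ext_iff, apply_ite (Fin.val)]
          split_ifs <;> simp <;> omega),
        card_filter_of_iff_interval (c := 0) (d := a - p) (by omega) _ (fun j => by
          simp only [fTab, reduceIte, Fin.ext_iff, apply_ite (Fin.val)]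
          split_ifs <;> simp <;> omega)]
      omega
    · rw [card_filter_of_iff_interval (c := a + p) (d := 2 * a) (by omega) _ (fun j => by
          simp only [fTab, reduceIte, Fin.ext_iff, apply_ite (Fin.val)]
          split_ifs <;> simp <;> omega),
        card_filter_of_iff_interval (c := a - p) (d := a) (by omega) _ (fun j => by
          simp only [fTab, reduceIte, Fin.ext_iff, apply_ite (Fin.val)]
          split_ifs <;> simp <;> omega)]
      omega
    · rw [card_filter_of_iff_interval (c := 2 * a) (d := 2 * a) (by omega) _ (fun j => by
          simp only [fTab, reduceIte, Fin.ext_iff, apply_ite (Fin.val)]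
          split_ifs <;> simp <;> omega),
        card_filter_of_iff_interval (c := a) (d := 2 * a) (by omega) _ (fun j => by
          simp only [fTab, reduceIte, Fin.ext_iff, apply_ite (Fin.val)]
          split_ifs <;> simp <;> omega)]
      omega

private lemma fTab_ne (a p q : ℕ) (hlt : p < q) (hq : q ≤ a) : fTab a p ≠ fTab a q := by
  intro hpq
  have hja : a + p < 2 * a := by omega
  have := congrFun (congrFun hpq 0) ⟨a + p, hja⟩
  simp only [fTab, reduceIte] at this
  rw [if_neg (by omega), if_neg (by omega), if_neg (by omega), if_pos (by omega)] at this
  exact absurd (Fin.ext_iff.mp this) (by simp)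

private lemma fTab_inj (a : ℕ) : Set.InjOn (fun p => fTab a p) (Set.Iic a) := by
  intro p hp q hq hpq
  simp only [Set.mem_Iic] at hp hq
  by_contra hne
  rcases lt_or_gt_of_ne hne with h | h
  · exact fTab_ne a p q h hq hpq
  · exact fTab_ne a q p h hp hpq.symm

theorem rectangular_ssyt_count (a : ℕ) (ha : 1 ≤ a) :
    Set.ncard {T : Fin 2 → Fin (2 * a) → Fin 4 |
      (∀ i j j', j ≤ j' → T i j ≤ T i j') ∧
      (∀ j, T 0 j < T 1 j) ∧
      (∀ v : Fin 4,
        (Finset.univ.filter (fun p : Fin 2 × Fin (2 * a) => T p.1 p.2 = v)).card = a)} =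
    a + 1 := by
  have hset : {T : Fin 2 → Fin (2 * a) → Fin 4 |
      (∀ i j j', j ≤ j' → T i j ≤ T i j') ∧
      (∀ j, T 0 j < T 1 j) ∧
      (∀ v : Fin 4,
        (Finset.univ.filter (fun p : Fin 2 × Fin (2 * a) => T p.1 p.2 = v)).card = a)} =
      (fun p => fTab a p) '' (Set.Iic a) := by
    ext T
    constructor
    · rintro ⟨hmono, hcol, hcount⟩
      obtain ⟨p, hp, rfl⟩ := fTab_forward a T hmono hcol hcount
      exact ⟨p, hp, rfl⟩
    · rintro ⟨p, hp, rfl⟩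
      exact fTab_mem a p hp
  rw [hset, Set.ncard_image_of_injOn (fTab_inj a)]
  rw [← Finset.coe_Iic, Set.ncard_coe_finset, Nat.card_Iic]
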